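/- Let R be an expanding edge replacement system (satisfying the loop-color assumption) and let Gl_R be its gluing automaton. Then an infinite sequence (x₀,y₀)(x₁,y₁)… over the alphabet Σ² is recognized by Gl_R if and only if the two component sequences x₀x₁… and y₀y₁… both belong to the symbol space Ω_R and are glued, i.e. x₀x₁… ∼ y₀y₁…. -/

import Mathlib

/-!
Formalization of edge replacement systems, their limit-space gluing relation,
and the gluing automaton, following Belk–Forrest and the paper
"Rationality of the gluing of edge replacement systems".
-/

namespace ERSPaper

/-- The five adjacency-type symbols `in`, `out`, `lp`, `db⁺`, `db⁻`. -/
inductive EType : Type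
  | inn : EType
  | out : EType
  | lp : EType
  | dbp : EType
  | dbm : EType
  deriving DecidableEq

/-- An edge replacement system satisfying the loop-color assumption.
`V z` / `E z` are the vertices/edges of the base graph (`z = none`) or of the
replacement graph `Γ c` (`z = some c`).  For loop colors the two boundary
vertices coincide (the single boundary vertex `λ_c`); for non-loop colors they
are distinct.  The field `loop_iff` is the loop-color assumption: an edge is a
loop if and only if its color is a loop color. -/
structure ERS : Type 1 where
  Col : Type
  [colFintype : Fintype Col]
  [colDecEq : DecidableEq Col]
  V : Option Col → Type
  E : Option Col → Type
  [vFintype : ∀ z, Fintype (V z)]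
  [eFintype : ∀ z, Fintype (E z)]
  [vDecEq : ∀ z, DecidableEq (V z)]
  ini : ∀ z, E z → V z
  fin : ∀ z, E z → V z
  col : ∀ z, E z → Col
  loopCol : Col → Prop
  bIni : ∀ c : Col, V (some c)
  bFin : ∀ c : Col, V (some c)
  bd_eq_iff : ∀ c : Col, (bIni c = bFin c ↔ loopCol c)
  loop_iff : ∀ z (e : E z), (ini z e = fin z e ↔ loopCol (col z e))

attribute [instance] ERS.colFintype ERS.colDecEq ERS.vFintype ERS.eFintype ERS.vDecEq

namespace ERS

/-- The alphabet `Σ`: the disjoint union of the edge sets of the base graph and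
of all the replacement graphs. -/
def Alph (R : ERS) : Type := Σ z : Option R.Col, R.E z

/-- Membership in the symbol space `Ω_R`: infinite directed walks on the color
graph starting at `q(0)`, i.e. `x₀` is an edge of the base graph and `x_{l+1}`
is an edge of `Γ_{c(x_l)}`. -/
def IsWalk (R : ERS) (x : ℕ → R.Alph) : Prop :=
  (x 0).1 = none ∧ ∀ l : ℕ, (x (l + 1)).1 = some (R.col (x l).1 (x l).2)

/-- The finite word `x₀ … x_m` belongs to `E_R`. -/
def IsWalkUpTo (R : ERS) (x : ℕ → R.Alph) (m : ℕ) : Prop :=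
  (x 0).1 = none ∧ ∀ l : ℕ, l < m → (x (l + 1)).1 = some (R.col (x l).1 (x l).2)

theorem IsWalk.upTo {R : ERS} {x : ℕ → R.Alph} (hx : R.IsWalk x) (m : ℕ) :
    R.IsWalkUpTo x m :=
  ⟨hx.1, fun l _ => hx.2 l⟩

end ERS

/-- A finite graph whose edges are colored by the colors of `R`. -/
structure GraphData (R : ERS) : Type 1 where
  V : Type
  E : Type
  ι : E → V
  τ : E → V
  col : E → R.Col

/-- An edge is incident on a vertex. -/
def GraphData.IncidentOn {R : ERS} (G : GraphData R) (e : G.E) (v : G.V) : Prop :=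
  G.ι e = v ∨ G.τ e = v

/-- Two edges are incident on a common vertex. -/
def GraphData.Adjacent {R : ERS} (G : GraphData R) (e f : G.E) : Prop :=
  ∃ v : G.V, G.IncidentOn e v ∧ G.IncidentOn f v

namespace ERS

/-- When expanding the edge `e`, a vertex `v` of the replacement graph
`Γ_{c(e)}` is attached: boundary vertices go to the endpoints of `e`,
interior vertices give fresh vertices. -/
def attach (R : ERS) (G : GraphData R) (e : G.E) (v : R.V (some (G.col e))) :
    G.V ⊕ (Σ e : G.E,
      {v : R.V (some (G.col e)) // v ≠ R.bIni (G.col e) ∧ v ≠ R.bFin (G.col e)}) :=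
  if h1 : v = R.bIni (G.col e) then Sum.inl (G.ι e)
  else if h2 : v = R.bFin (G.col e) then Sum.inl (G.τ e)
  else Sum.inr ⟨e, v, h1, h2⟩

/-- The simultaneous expansion of every edge of `G`. -/
def expandG (R : ERS) (G : GraphData R) : GraphData R where
  V := G.V ⊕ (Σ e : G.E,
    {v : R.V (some (G.col e)) // v ≠ R.bIni (G.col e) ∧ v ≠ R.bFin (G.col e)})
  E := Σ e : G.E, R.E (some (G.col e))
  ι := fun p => R.attach G p.1 (R.ini (some (G.col p.1)) p.2)
  τ := fun p => R.attach G p.1 (R.fin (some (G.col p.1)) p.2)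
  col := fun p => R.col (some (G.col p.1)) p.2

/-- The base graph, as graph data. -/
def base (R : ERS) : GraphData R :=
  ⟨R.V none, R.E none, R.ini none, R.fin none, R.col none⟩

/-- The full expansion sequence `E_m`. -/
def fullExp (R : ERS) : ℕ → GraphData R
  | 0 => R.base
  | m + 1 => R.expandG (R.fullExp m)

theorem col_cast (R : ERS) (p : R.Alph) (z : Option R.Col) (h : p.1 = z) :
    R.col z (cast (congrArg R.E h) p.2) = R.col p.1 p.2 := by
  rcases p with ⟨w, e⟩
  cases h
  rfl

/-- The edge of the full expansion `E_m` labeled by the word `x₀ … x_m`,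
together with the fact that its color is the color of its last letter. -/
def wordEdge (R : ERS) (x : ℕ → R.Alph) :
    (m : ℕ) → R.IsWalkUpTo x m →
      {e : (R.fullExp m).E // (R.fullExp m).col e = R.col (x m).1 (x m).2}
  | 0, hx => ⟨cast (congrArg R.E hx.1) (x 0).2, R.col_cast (x 0) none hx.1⟩
  | m + 1, hx =>
    let prev := R.wordEdge x m ⟨hx.1, fun l hl => hx.2 l (Nat.lt_succ_of_lt hl)⟩
    let h : (x (m + 1)).1 = some ((R.fullExp m).col prev.1) :=
      (hx.2 m (Nat.lt_succ_self m)).trans (congrArg some prev.2.symm)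
    ⟨⟨prev.1, cast (congrArg R.E h) (x (m + 1)).2⟩, R.col_cast (x (m + 1)) _ h⟩

/-- The gluing relation: two elements of `Ω_R` are glued when, for every large
enough `n`, their length-`(n+1)` prefixes are incident on a common vertex of
the full expansion `E_n`. -/
def Glued (R : ERS) (x y : ℕ → R.Alph) (hx : R.IsWalk x) (hy : R.IsWalk y) : Prop :=
  ∃ N : ℕ, ∀ n : ℕ, N ≤ n →
    (R.fullExp n).Adjacent (R.wordEdge x n (hx.upTo n)).1 (R.wordEdge y n (hy.upTo n)).1

/-- The expanding condition on a replacement system (formulated after the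
identification of the boundary vertices for loop colors). -/
structure Expanding (R : ERS) : Prop where
  no_isolated : ∀ z (v : R.V z), ∃ e : R.E z, R.ini z e = v ∨ R.fin z e = v
  no_bd_edge : ∀ c : R.Col, ¬ R.loopCol c → ∀ e : R.E (some c),
    ¬ ((R.ini (some c) e = R.bIni c ∧ R.fin (some c) e = R.bFin c) ∨
       (R.ini (some c) e = R.bFin c ∧ R.fin (some c) e = R.bIni c))
  two_edges : ∀ c : R.Col, 2 ≤ Fintype.card (R.E (some c))
  interior : ∀ c : R.Col, ∃ v : R.V (some c), v ≠ R.bIni c ∧ v ≠ R.bFin c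

end ERS

/-- `EndAt ι τ v α` : the edge with initial vertex `ι` and terminal vertex `τ`
is incident on `v`, in the fashion recorded by `α`: incoming (`in`), outgoing
(`out`) or a loop (`lp`). -/
inductive EndAt {V : Type} : V → V → V → EType → Prop
  | inn {i v : V} : i ≠ v → EndAt i v v .inn
  | out {t v : V} : v ≠ t → EndAt v t v .out
  | lp {v : V} : EndAt v v v .lp

/-- Two non-loop edges (given by their endpoints) are parallel. -/
def Parallel {V : Type} (ia ta ib tb : V) : Prop :=
  ia ≠ ta ∧ ((ia = ib ∧ ta = tb) ∨ (ia = tb ∧ ta = ib))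

/-- The Type 1 adjacency-type rule for two distinct adjacent edges, given by
their endpoints: parallel non-loops give the `db` types (same or opposite
orientation), and otherwise the unique common vertex `v` determines the types
via `EndAt`. -/
inductive AdjType {V : Type} : V → V → V → V → EType → EType → Prop
  | dbSame {u v : V} : u ≠ v → AdjType u v u v .dbp .dbp
  | dbOpp {u v : V} : u ≠ v → AdjType u v v u .dbp .dbm
  | single {ia ta ib tb v : V} {α β : EType} :
      ¬ Parallel ia ta ib tb → EndAt ia ta v α → EndAt ib tb v β →
      AdjType ia ta ib tb α β

/-- The states of the gluing automaton `Gl_R`. -/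
inductive GlState (R : ERS) : Type
  | q0 : Option R.Col → GlState R
  | q1 : R.Col → EType → R.Col → EType → GlState R

/-- Membership in `Q₀`. -/
def GlState.inQ0 {R : ERS} : GlState R → Prop
  | .q0 _ => True
  | _ => False

/-- Membership in `Q₁`. -/
def GlState.inQ1 {R : ERS} : GlState R → Prop
  | .q1 _ _ _ _ => True
  | _ => False

/-- The defining conditions for states of `Q₁`: `γ ≠ db⁻` and
(`δ ∈ {db⁺, db⁻}` iff `γ = db⁺`). -/
def GlState.Valid {R : ERS} : GlState R → Prop
  | .q0 _ => True
  | .q1 _ γ _ δ => γ ≠ .dbm ∧ ((δ = .dbp ∨ δ = .dbm) ↔ γ = .dbp)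

/-- The tracked boundary vertex of `Γ_c` for a non-`db` symbol:
`τ_c` for `in`, `ι_c` for `out`, and `λ_c` (the identified boundary vertex)
for `lp`. -/
def trackedV (R : ERS) (c : R.Col) : EType → Set (R.V (some c))
  | .inn => {R.bFin c}
  | .out => {R.bIni c}
  | .lp => {R.bIni c}
  | _ => ∅

/-- The pairs of tracked vertices of a state `q₁(i,γ;j,δ)`. -/
inductive TrackedPair (R : ERS) (i j : R.Col) :
    EType → EType → R.V (some i) → R.V (some j) → Prop
  | nondb {γ δ : EType} {u : R.V (some i)} {w : R.V (some j)} :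
      u ∈ trackedV R i γ → w ∈ trackedV R j δ → TrackedPair R i j γ δ u w
  | dbppIni : TrackedPair R i j .dbp .dbp (R.bIni i) (R.bIni j)
  | dbppFin : TrackedPair R i j .dbp .dbp (R.bFin i) (R.bFin j)
  | dbpmIni : TrackedPair R i j .dbp .dbm (R.bIni i) (R.bFin j)
  | dbpmFin : TrackedPair R i j .dbp .dbm (R.bFin i) (R.bIni j)

/-- The transitions of the gluing automaton `Gl_R`. -/
inductive GlTrans (R : ERS) : GlState R → R.Alph × R.Alph → GlState R → Prop
  | type0 (z : Option R.Col) (e : R.E z) :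
      GlTrans R (.q0 z) (⟨z, e⟩, ⟨z, e⟩) (.q0 (some (R.col z e)))
  | type1 (z : Option R.Col) (a b : R.E z) (hab : a ≠ b) {α β : EType}
      (h : AdjType (R.ini z a) (R.fin z a) (R.ini z b) (R.fin z b) α β) :
      GlTrans R (.q0 z) (⟨z, a⟩, ⟨z, b⟩) (.q1 (R.col z a) α (R.col z b) β)
  | type2 (i j : R.Col) (γ δ : EType) (a : R.E (some i)) (b : R.E (some j))
      {u : R.V (some i)} {w : R.V (some j)}
      (hp : TrackedPair R i j γ δ u w) {α β : EType}
      (ha : EndAt (R.ini (some i) a) (R.fin (some i) a) u α)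
      (hb : EndAt (R.ini (some j) b) (R.fin (some j) b) w β) :
      GlTrans R (.q1 i γ j δ) (⟨some i, a⟩, ⟨some j, b⟩)
        (.q1 (R.col (some i) a) α (R.col (some j) b) β)

/-- Infinite runs of `Gl_R` from the initial state `q₀(0)`. -/
def GlRun (R : ERS) (w : ℕ → R.Alph × R.Alph) (q : ℕ → GlState R) : Prop :=
  q 0 = .q0 none ∧ ∀ l : ℕ, GlTrans R (q l) (w l) (q (l + 1))

/-- `Gl_R` recognizes the infinite sequence `w`. -/
def GlAccepts (R : ERS) (w : ℕ → R.Alph × R.Alph) : Prop :=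
  ∃ q : ℕ → GlState R, GlRun R w q

/-- Finite runs of `Gl_R` processing the letters `w 0, …, w m`. -/
def GlRunFin (R : ERS) (w : ℕ → R.Alph × R.Alph) (m : ℕ) (q : ℕ → GlState R) : Prop :=
  q 0 = .q0 none ∧ ∀ l : ℕ, l ≤ m → GlTrans R (q l) (w l) (q (l + 1))

/-- `Gl_R` recognizes the finite word `w 0, …, w m`. -/
def GlAcceptsFin (R : ERS) (w : ℕ → R.Alph × R.Alph) (m : ℕ) : Prop :=
  ∃ q : ℕ → GlState R, GlRunFin R w m q

/-- The transitions of the full sub-automaton `T_R` induced by `Q₀`. -/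
def TTrans (R : ERS) (s : GlState R) (p : R.Alph × R.Alph) (t : GlState R) : Prop :=
  GlTrans R s p t ∧ s.inQ0 ∧ t.inQ0

/-- Finite runs of `T_R` processing the letters `w 0, …, w m`. -/
def TRunFin (R : ERS) (w : ℕ → R.Alph × R.Alph) (m : ℕ) (q : ℕ → GlState R) : Prop :=
  q 0 = .q0 none ∧ ∀ l : ℕ, l ≤ m → TTrans R (q l) (w l) (q (l + 1))

/-- `T_R` recognizes the finite word `w 0, …, w m`. -/
def TAcceptsFin (R : ERS) (w : ℕ → R.Alph × R.Alph) (m : ℕ) : Prop :=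
  ∃ q : ℕ → GlState R, TRunFin R w m q

end ERSPaper

/-!
A run of `Gl_R` on `(x, y)` maintains the following invariant: after reading `x₀…x_m` and
`y₀…y_m` it is in `q₀(c)` if these words label the same edge of `E_m` (of color `c`), and in
`q₁(i,γ;j,δ)` if they label distinct edges of colors `i`, `j` meeting with adjacency type
`(γ,δ)`. Expanding every edge of `E_m`, children of a single edge of color `c` meet exactly
as their labels do in `Γ_c`, while children of two distinct edges can only meet in a vertex
inherited from `E_m`, that is, in a tracked boundary vertex; since no edge of a replacement
graph joins `ι_c` to `τ_c`, such children are never parallel. Hence a transition exists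
exactly when the children are adjacent, and it leads to the state describing them. So `Gl_R`
accepts `(x, y)` iff all prefixes `x₀…x_m`, `y₀…y_m` are adjacent in `E_m`, and as adjacency
of children implies adjacency of the parents, this is the gluing relation.
-/

theorem exists_seq_of_forall_exists {α : Type*} (P : ℕ → α → Prop) (r : ℕ → α → α → Prop)
    {a : α} (ha : P 0 a) (h : ∀ n a, P n a → ∃ b, r n a b ∧ P (n + 1) b) :
    ∃ f : ℕ → α, f 0 = a ∧ ∀ n, r n (f n) (f (n + 1)) := by
  choose g hg using h
  let F : ∀ n, {b // P n b} := fun n =>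
    Nat.rec ⟨a, ha⟩ (fun n b => ⟨g n b.1 b.2, (hg n b.1 b.2).2⟩) n
  exact ⟨fun n => (F n).1, rfl, fun n => (hg n (F n).1 (F n).2).1⟩

namespace ERSPaper

section Endpoints

variable {V W : Type} {f : V → W}

theorem endAt_iff {i t v : V} {α : EType} :
    EndAt i t v α ↔
      (α = .inn ∧ t = v ∧ i ≠ v) ∨ (α = .out ∧ i = v ∧ v ≠ t) ∨ (α = .lp ∧ i = v ∧ t = v) := by
  constructor
  · rintro (h | h | _)
    exacts [.inl ⟨rfl, rfl, h⟩, .inr (.inl ⟨rfl, rfl, h⟩), .inr (.inr ⟨rfl, rfl, rfl⟩)]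
  · rintro (⟨rfl, rfl, h⟩ | ⟨rfl, rfl, h⟩ | ⟨rfl, rfl, rfl⟩)
    exacts [.inn h, .out h, .lp]

theorem EndAt.incident {i t v : V} {α : EType} (h : EndAt i t v α) : i = v ∨ t = v := by
  rcases h with _ | _ | _ <;> simp

theorem EndAt.ne_dbp {i t v : V} {α : EType} (h : EndAt i t v α) : α ≠ .dbp := by
  rintro rfl; cases h

theorem exists_endAt {i t v : V} (h : i = v ∨ t = v) : ∃ α, EndAt i t v α := by
  rcases eq_or_ne i t with rfl | hne
  · obtain rfl : i = v := h.elim id id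
    exact ⟨.lp, .lp⟩
  · rcases h with rfl | rfl
    exacts [⟨.out, .out hne⟩, ⟨.inn, .inn hne⟩]

theorem endAt_map_iff (hf : f.Injective) {i t : V} {v' : W} {α : EType} :
    EndAt (f i) (f t) v' α ↔ ∃ v, f v = v' ∧ EndAt i t v α := by
  constructor
  · intro h
    obtain ⟨v, rfl⟩ : ∃ v, f v = v' := h.incident.elim (⟨i, ·⟩) (⟨t, ·⟩)
    exact ⟨v, rfl, by simpa only [endAt_iff, hf.eq_iff, hf.ne_iff] using h⟩
  · rintro ⟨v, rfl, h⟩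
    simpa only [endAt_iff, hf.eq_iff, hf.ne_iff] using h

theorem parallel_map_iff (hf : f.Injective) {ia ta ib tb : V} :
    Parallel (f ia) (f ta) (f ib) (f tb) ↔ Parallel ia ta ib tb := by
  simp only [Parallel, hf.eq_iff, hf.ne_iff]

theorem parallel_of_incident {ia ta ib tb v v' : V} (hne : v ≠ v')
    (ha : ia = v ∨ ta = v) (hb : ib = v ∨ tb = v)
    (ha' : ia = v' ∨ ta = v') (hb' : ib = v' ∨ tb = v') : Parallel ia ta ib tb := by
  unfold Parallel
  grind

theorem eq_of_incident_of_not_parallel {ia ta ib tb v v' : V} (hnp : ¬ Parallel ia ta ib tb)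
    (ha : ia = v ∨ ta = v) (hb : ib = v ∨ tb = v)
    (ha' : ia = v' ∨ ta = v') (hb' : ib = v' ∨ tb = v') : v = v' :=
  by_contra fun hne => hnp (parallel_of_incident hne ha hb ha' hb')

theorem adjType_iff {ia ta ib tb : V} {α β : EType} :
    AdjType ia ta ib tb α β ↔
      (¬ Parallel ia ta ib tb ∧ ∃ v, EndAt ia ta v α ∧ EndAt ib tb v β) ∨
      (α = .dbp ∧ ia ≠ ta ∧
        (β = .dbp ∧ ib = ia ∧ tb = ta ∨ β = .dbm ∧ ib = ta ∧ tb = ia)) := by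
  constructor
  · rintro (hne | hne | ⟨hnp, hA, hB⟩)
    exacts [.inr ⟨rfl, hne, .inl ⟨rfl, rfl, rfl⟩⟩, .inr ⟨rfl, hne, .inr ⟨rfl, rfl, rfl⟩⟩,
      .inl ⟨hnp, _, hA, hB⟩]
  · rintro (⟨hnp, v, hA, hB⟩ | ⟨rfl, hne, ⟨rfl, rfl, rfl⟩ | ⟨rfl, rfl, rfl⟩⟩)
    exacts [.single hnp hA hB, .dbSame hne, .dbOpp hne]

theorem adjType_iff_of_not_parallel {ia ta ib tb : V} {α β : EType}
    (hnp : ¬ Parallel ia ta ib tb) :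
    AdjType ia ta ib tb α β ↔ ∃ v, EndAt ia ta v α ∧ EndAt ib tb v β := by
  rw [adjType_iff]
  refine ⟨?_, fun h => .inl ⟨hnp, h⟩⟩
  rintro (⟨-, h⟩ | ⟨-, hne, ⟨-, rfl, rfl⟩ | ⟨-, rfl, rfl⟩⟩)
  exacts [h, absurd ⟨hne, .inl ⟨rfl, rfl⟩⟩ hnp, absurd ⟨hne, .inr ⟨rfl, rfl⟩⟩ hnp]

theorem AdjType.exists_common {ia ta ib tb : V} {α β : EType} (h : AdjType ia ta ib tb α β) :
    ∃ v, (ia = v ∨ ta = v) ∧ (ib = v ∨ tb = v) := by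
  rcases h with _ | _ | ⟨-, hA, hB⟩
  exacts [⟨_, .inl rfl, .inl rfl⟩, ⟨_, .inl rfl, .inr rfl⟩, ⟨_, hA.incident, hB.incident⟩]

theorem exists_adjType {ia ta ib tb v : V} (ha : ia = v ∨ ta = v) (hb : ib = v ∨ tb = v) :
    ∃ α β, AdjType ia ta ib tb α β := by
  by_cases hp : Parallel ia ta ib tb
  · obtain ⟨hne, ⟨rfl, rfl⟩ | ⟨rfl, rfl⟩⟩ := hp
    exacts [⟨_, _, .dbSame hne⟩, ⟨_, _, .dbOpp hne⟩]
  · obtain ⟨α, hA⟩ := exists_endAt ha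
    obtain ⟨β, hB⟩ := exists_endAt hb
    exact ⟨α, β, .single hp hA hB⟩

theorem adjType_map_iff (hf : f.Injective) {ia ta ib tb : V} {α β : EType} :
    AdjType (f ia) (f ta) (f ib) (f tb) α β ↔ AdjType ia ta ib tb α β := by
  have common : (∃ v', EndAt (f ia) (f ta) v' α ∧ EndAt (f ib) (f tb) v' β) ↔
      ∃ v, EndAt ia ta v α ∧ EndAt ib tb v β := by
    constructor
    · rintro ⟨v', hA, hB⟩
      obtain ⟨v, rfl, hA'⟩ := (endAt_map_iff hf).1 hA
      obtain ⟨u, hu, hB'⟩ := (endAt_map_iff hf).1 hB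
      exact ⟨v, hA', hf hu ▸ hB'⟩
    · rintro ⟨v, hA, hB⟩
      exact ⟨f v, (endAt_map_iff hf).2 ⟨v, rfl, hA⟩, (endAt_map_iff hf).2 ⟨v, rfl, hB⟩⟩
  simp only [adjType_iff, parallel_map_iff hf, common, hf.eq_iff, hf.ne_iff]

end Endpoints

section

variable {R : ERS}

def GlState.Describes (G : GraphData R) (a b : G.E) : GlState R → Prop
  | .q0 z => a = b ∧ z = some (G.col a)
  | .q1 i γ j δ => a ≠ b ∧ i = G.col a ∧ j = G.col b ∧
      AdjType (G.ι a) (G.τ a) (G.ι b) (G.τ b) γ δ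

theorem GlState.Describes.adjacent {G : GraphData R} {a b : G.E} {s : GlState R}
    (hs : s.Describes G a b) : G.Adjacent a b := by
  cases s with
  | q0 z =>
    obtain ⟨rfl, -⟩ := hs
    exact ⟨G.ι a, .inl rfl, .inl rfl⟩
  | q1 i γ j δ =>
    obtain ⟨-, -, -, hadj⟩ := hs
    exact hadj.exists_common

theorem GraphData.Adjacent.exists_describes {G : GraphData R} {a b : G.E}
    (h : G.Adjacent a b) : ∃ s : GlState R, s.Describes G a b := by
  rcases eq_or_ne a b with rfl | hne
  · exact ⟨.q0 (some (G.col a)), rfl, rfl⟩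
  · obtain ⟨v, ha, hb⟩ := h
    obtain ⟨α, β, hadj⟩ := exists_adjType ha hb
    exact ⟨.q1 _ α _ β, hne, rfl, rfl, hadj⟩

theorem GlState.describes_map_iff {G G' : GraphData R} {fE : G'.E → G.E} {fV : G'.V → G.V}
    (hfE : fE.Injective) (hfV : fV.Injective) (hι : ∀ e, G.ι (fE e) = fV (G'.ι e))
    (hτ : ∀ e, G.τ (fE e) = fV (G'.τ e)) (hcol : ∀ e, G.col (fE e) = G'.col e)
    {a b : G'.E} {s : GlState R} :
    s.Describes G (fE a) (fE b) ↔ s.Describes G' a b := by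
  cases s with
  | q0 z => simp only [Describes, hfE.eq_iff, hcol]
  | q1 i γ j δ => simp only [Describes, hfE.ne_iff, hcol, hι, hτ, adjType_map_iff hfV]

/-- `Γ_c` for `z = some c`; `R.graph none` unfolds to `R.base`. -/
def ERS.graph (R : ERS) (z : Option R.Col) : GraphData R :=
  ⟨R.V z, R.E z, R.ini z, R.fin z, R.col z⟩

theorem glTrans_q0_iff {z : Option R.Col} {a b : R.E z} {t : GlState R} :
    GlTrans R (.q0 z) (⟨z, a⟩, ⟨z, b⟩) t ↔ t.Describes (R.graph z) a b := by
  constructor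
  · rintro (_ | ⟨_, _, _, hab, hadj⟩)
    exacts [⟨rfl, rfl⟩, ⟨hab, rfl, rfl, hadj⟩]
  · cases t with
    | q0 z' =>
      rintro ⟨rfl, rfl⟩
      exact .type0 z a
    | q1 i γ j δ =>
      rintro ⟨hab, rfl, rfl, hadj⟩
      exact .type1 z a b hab hadj

theorem glTrans_q1_iff {i j : R.Col} {γ δ : EType} {a : R.E (some i)} {b : R.E (some j)}
    {t : GlState R} :
    GlTrans R (.q1 i γ j δ) (⟨some i, a⟩, ⟨some j, b⟩) t ↔
      ∃ u w α β, TrackedPair R i j γ δ u w ∧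
        EndAt (R.ini (some i) a) (R.fin (some i) a) u α ∧
        EndAt (R.ini (some j) b) (R.fin (some j) b) w β ∧
        t = .q1 (R.col (some i) a) α (R.col (some j) b) β := by
  constructor
  · rintro (_ | _ | ⟨_, _, _, _, _, _, hp, ha, hb⟩)
    exact ⟨_, _, _, _, hp, ha, hb, rfl⟩
  · rintro ⟨u, w, α, β, hp, ha, hb, rfl⟩
    exact .type2 i j γ δ a b hp ha hb

def ERS.NoBoundaryEdge (R : ERS) : Prop :=
  ∀ c : R.Col, ¬ R.loopCol c → ∀ e : R.E (some c),
    ¬ ((R.ini (some c) e = R.bIni c ∧ R.fin (some c) e = R.bFin c) ∨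
       (R.ini (some c) e = R.bFin c ∧ R.fin (some c) e = R.bIni c))

def GraphData.IsLoopColored (G : GraphData R) : Prop :=
  ∀ e, G.ι e = G.τ e ↔ R.loopCol (G.col e)

section Expansion

variable {G : GraphData R}

theorem attach_eq_inl_iff (hG : G.IsLoopColored) {e : G.E} {X : R.V (some (G.col e))}
    {v : G.V} :
    R.attach G e X = .inl v ↔
      (X = R.bIni (G.col e) ∧ G.ι e = v) ∨ (X = R.bFin (G.col e) ∧ G.τ e = v) := by
  have hbd := R.bd_eq_iff (G.col e)
  have hloop := hG e
  unfold ERS.attach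
  split_ifs <;> grind

theorem exists_attach_eq_inl_of_ne {a b : G.E} (hab : a ≠ b) {X : R.V (some (G.col a))}
    {Y : R.V (some (G.col b))} (h : R.attach G a X = R.attach G b Y) :
    ∃ v, R.attach G a X = .inl v := by
  unfold ERS.attach at h ⊢
  split_ifs at h ⊢ <;> simp_all

theorem attach_injective (hG : G.IsLoopColored) (e : G.E) : (R.attach G e).Injective := by
  intro X Y h
  have hbd := R.bd_eq_iff (G.col e)
  have hloop := hG e
  unfold ERS.attach at h
  split_ifs at h <;> simp_all

theorem GraphData.IsLoopColored.expandG (hG : G.IsLoopColored) : (R.expandG G).IsLoopColored :=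
  fun ⟨e, a⟩ => (attach_injective hG e).eq_iff.trans (R.loop_iff _ a)

theorem isLoopColored_fullExp (R : ERS) : ∀ m, (R.fullExp m).IsLoopColored
  | 0 => R.loop_iff none
  | m + 1 => (isLoopColored_fullExp R m).expandG

theorem not_parallel_expandG (hR : R.NoBoundaryEdge) (hG : G.IsLoopColored) {a b : G.E}
    (hab : a ≠ b) (a' : R.E (some (G.col a))) (b' : R.E (some (G.col b))) :
    ¬ Parallel ((R.expandG G).ι ⟨a, a'⟩) ((R.expandG G).τ ⟨a, a'⟩)
      ((R.expandG G).ι ⟨b, b'⟩) ((R.expandG G).τ ⟨b, b'⟩) := by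
  rintro ⟨hne, hp⟩
  have boundary : ∀ X : R.V (some (G.col a)), (∃ Y : R.V (some (G.col b)),
      R.attach G a X = R.attach G b Y) → X = R.bIni (G.col a) ∨ X = R.bFin (G.col a) := by
    rintro X ⟨Y, h⟩
    obtain ⟨v, hv⟩ := exists_attach_eq_inl_of_ne hab h
    rcases (attach_eq_inl_iff hG).1 hv with ⟨h, -⟩ | ⟨h, -⟩
    exacts [.inl h, .inr h]
  have hini := boundary (R.ini _ a') (by rcases hp with ⟨h, -⟩ | ⟨h, -⟩ <;> exact ⟨_, h⟩)
  have hfin := boundary (R.fin _ a') (by rcases hp with ⟨-, h⟩ | ⟨-, h⟩ <;> exact ⟨_, h⟩)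
  have hne' : R.ini _ a' ≠ R.fin _ a' := fun h => hne (congrArg (R.attach G a) h)
  -- so `a'` joins the two boundary vertices `ι_c ≠ τ_c` of `Γ_c`, `c = G.col a`
  have hbd := R.bd_eq_iff (G.col a)
  exact hR _ (fun h => hne' (by grind)) a' (by grind)

theorem attach_eq_inl_iff_mem_trackedV (hG : G.IsLoopColored) {e : G.E} {v : G.V}
    {γ : EType} (hv : EndAt (G.ι e) (G.τ e) v γ) {u : R.V (some (G.col e))} :
    R.attach G e u = .inl v ↔ u ∈ trackedV R (G.col e) γ := by
  have hbd := R.bd_eq_iff (G.col e)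
  have hloop := hG e
  rw [attach_eq_inl_iff hG]
  rcases endAt_iff.1 hv with ⟨rfl, h⟩ | ⟨rfl, h⟩ | ⟨rfl, h⟩ <;>
    simp only [trackedV, Set.mem_singleton_iff] <;> grind

theorem trackedPair_iff {i j : R.Col} {γ δ : EType} {u : R.V (some i)} {w : R.V (some j)} :
    TrackedPair R i j γ δ u w ↔
      (u ∈ trackedV R i γ ∧ w ∈ trackedV R j δ) ∨
      (γ = .dbp ∧ δ = .dbp ∧ (u = R.bIni i ∧ w = R.bIni j ∨ u = R.bFin i ∧ w = R.bFin j)) ∨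
      (γ = .dbp ∧ δ = .dbm ∧ (u = R.bIni i ∧ w = R.bFin j ∨ u = R.bFin i ∧ w = R.bIni j)) := by
  constructor
  · rintro (⟨hu, hw⟩ | _ | _ | _ | _) <;> simp [*]
  · rintro (⟨hu, hw⟩ | ⟨rfl, rfl, ⟨rfl, rfl⟩ | ⟨rfl, rfl⟩⟩ | ⟨rfl, rfl, ⟨rfl, rfl⟩ | ⟨rfl, rfl⟩⟩)
    exacts [.nondb hu hw, .dbppIni, .dbppFin, .dbpmIni, .dbpmFin]

theorem trackedPair_iff_exists_attach (hG : G.IsLoopColored) {a b : G.E} {γ δ : EType}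
    (hadj : AdjType (G.ι a) (G.τ a) (G.ι b) (G.τ b) γ δ)
    {u : R.V (some (G.col a))} {w : R.V (some (G.col b))} :
    TrackedPair R (G.col a) (G.col b) γ δ u w ↔
      ∃ v, R.attach G a u = .inl v ∧ R.attach G b w = .inl v := by
  rw [trackedPair_iff]
  rcases adjType_iff.1 hadj with ⟨hnp, v₀, hA, hB⟩ | ⟨rfl, hne, ⟨rfl, hι, hτ⟩ | ⟨rfl, hι, hτ⟩⟩
  · simp only [hA.ne_dbp, false_and, or_false, ← attach_eq_inl_iff_mem_trackedV hG hA,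
      ← attach_eq_inl_iff_mem_trackedV hG hB]
    refine ⟨fun h => ⟨v₀, h⟩, fun ⟨v, hu, hw⟩ => ?_⟩
    obtain rfl : v = v₀ := by
      refine eq_of_incident_of_not_parallel hnp ?_ ?_ hA.incident hB.incident
      · rcases (attach_eq_inl_iff hG).1 hu with ⟨-, h⟩ | ⟨-, h⟩ <;> simp [h]
      · rcases (attach_eq_inl_iff hG).1 hw with ⟨-, h⟩ | ⟨-, h⟩ <;> simp [h]
    exact ⟨hu, hw⟩
  all_goals
    simp only [attach_eq_inl_iff hG, trackedV, Set.mem_empty_iff_false, false_and, false_or,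
      true_and, reduceCtorEq, and_false, or_false]
    constructor
    · rintro (h | h)
      exacts [⟨G.ι a, by grind⟩, ⟨G.τ a, by grind⟩]
    · rintro ⟨v, hu, hw⟩
      grind

theorem GraphData.Adjacent.of_expandG (hG : G.IsLoopColored) {a b : G.E}
    {a' : R.E (some (G.col a))} {b' : R.E (some (G.col b))}
    (h : (R.expandG G).Adjacent ⟨a, a'⟩ ⟨b, b'⟩) : G.Adjacent a b := by
  rcases eq_or_ne a b with rfl | hab
  · exact ⟨G.ι a, .inl rfl, .inl rfl⟩
  obtain ⟨V, ha, hb⟩ := h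
  obtain ⟨X, hX⟩ : ∃ X, R.attach G a X = V := ha.elim (⟨_, ·⟩) (⟨_, ·⟩)
  obtain ⟨Y, hY⟩ : ∃ Y, R.attach G b Y = V := hb.elim (⟨_, ·⟩) (⟨_, ·⟩)
  obtain ⟨v, hv⟩ := exists_attach_eq_inl_of_ne hab (hX.trans hY.symm)
  refine ⟨v, ?_, ?_⟩
  · rcases (attach_eq_inl_iff hG).1 hv with ⟨-, h⟩ | ⟨-, h⟩ <;> simp [GraphData.IncidentOn, h]
  · rcases (attach_eq_inl_iff hG).1 (hY.trans (hX.symm.trans hv)) with ⟨-, h⟩ | ⟨-, h⟩ <;>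
      simp [GraphData.IncidentOn, h]

theorem describes_expandG_same_iff (hG : G.IsLoopColored) {e : G.E}
    {a' b' : R.E (some (G.col e))} {t : GlState R} :
    t.Describes (R.expandG G) ⟨e, a'⟩ ⟨e, b'⟩ ↔ t.Describes (R.graph (some (G.col e))) a' b' :=
  GlState.describes_map_iff (G := R.expandG G) (G' := R.graph (some (G.col e)))
    (fE := fun x => ⟨e, x⟩) (fun _ _ h => eq_of_heq (Sigma.mk.inj h).2) (attach_injective hG e)
    (fun _ => rfl) (fun _ => rfl) (fun _ => rfl)

theorem adjType_expandG_iff_of_ne (hR : R.NoBoundaryEdge) (hG : G.IsLoopColored) {a b : G.E}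
    (hab : a ≠ b) {a' : R.E (some (G.col a))} {b' : R.E (some (G.col b))} {α β : EType} :
    AdjType ((R.expandG G).ι ⟨a, a'⟩) ((R.expandG G).τ ⟨a, a'⟩)
        ((R.expandG G).ι ⟨b, b'⟩) ((R.expandG G).τ ⟨b, b'⟩) α β ↔
      ∃ u w, (∃ v, R.attach G a u = .inl v ∧ R.attach G b w = .inl v) ∧
        EndAt (R.ini _ a') (R.fin _ a') u α ∧ EndAt (R.ini _ b') (R.fin _ b') w β := by
  rw [adjType_iff_of_not_parallel (not_parallel_expandG hR hG hab a' b')]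
  constructor
  · rintro ⟨V, hA, hB⟩
    obtain ⟨u, rfl, hA'⟩ := (endAt_map_iff (attach_injective hG a)).1 hA
    obtain ⟨w, hw, hB'⟩ := (endAt_map_iff (attach_injective hG b)).1 hB
    obtain ⟨v, hv⟩ := exists_attach_eq_inl_of_ne hab hw.symm
    exact ⟨u, w, ⟨v, hv, hw.trans hv⟩, hA', hB'⟩
  · rintro ⟨u, w, ⟨v, hu, hw⟩, hA, hB⟩
    exact ⟨.inl v, (endAt_map_iff (attach_injective hG a)).2 ⟨u, hu, hA⟩,
      (endAt_map_iff (attach_injective hG b)).2 ⟨w, hw, hB⟩⟩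

theorem describes_expandG_iff_of_ne (hR : R.NoBoundaryEdge) (hG : G.IsLoopColored)
    {a b : G.E} (hab : a ≠ b) {γ δ : EType}
    (hadj : AdjType (G.ι a) (G.τ a) (G.ι b) (G.τ b) γ δ)
    {a' : R.E (some (G.col a))} {b' : R.E (some (G.col b))} {t : GlState R} :
    t.Describes (R.expandG G) ⟨a, a'⟩ ⟨b, b'⟩ ↔
      ∃ u w α β, TrackedPair R (G.col a) (G.col b) γ δ u w ∧
        EndAt (R.ini _ a') (R.fin _ a') u α ∧ EndAt (R.ini _ b') (R.fin _ b') w β ∧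
        t = .q1 (R.col _ a') α (R.col _ b') β := by
  have hne : (⟨a, a'⟩ : (R.expandG G).E) ≠ ⟨b, b'⟩ := fun h => hab (congrArg Sigma.fst h)
  cases t with
  | q0 z =>
    simp only [GlState.Describes, reduceCtorEq, and_false, exists_false, iff_false]
    exact fun h => hne h.1
  | q1 i α j β =>
    simp only [GlState.Describes, GlState.q1.injEq, adjType_expandG_iff_of_ne hR hG hab,
      trackedPair_iff_exists_attach hG hadj]
    constructor
    · rintro ⟨-, rfl, rfl, u, w, hv, hA, hB⟩
      exact ⟨u, w, α, β, hv, hA, hB, rfl, rfl, rfl, rfl⟩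
    · rintro ⟨u, w, _, _, hv, hA, hB, rfl, rfl, rfl, rfl⟩
      exact ⟨hne, rfl, rfl, u, w, hv, hA, hB⟩

theorem glTrans_iff_describes_expandG (hR : R.NoBoundaryEdge) (hG : G.IsLoopColored)
    {a b : G.E} {s : GlState R} (hs : s.Describes G a b)
    {a' : R.E (some (G.col a))} {b' : R.E (some (G.col b))} {t : GlState R} :
    GlTrans R s (⟨some (G.col a), a'⟩, ⟨some (G.col b), b'⟩) t ↔
      t.Describes (R.expandG G) ⟨a, a'⟩ ⟨b, b'⟩ := by
  cases s with
  | q0 z =>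
    obtain ⟨rfl, rfl⟩ := hs
    exact glTrans_q0_iff.trans (describes_expandG_same_iff hG).symm
  | q1 i γ j δ =>
    obtain ⟨hab, rfl, rfl, hadj⟩ := hs
    exact glTrans_q1_iff.trans (describes_expandG_iff_of_ne hR hG hab hadj).symm

end Expansion

def GlState.graphIndices : GlState R → Option R.Col × Option R.Col
  | .q0 z => (z, z)
  | .q1 i _ j _ => (some i, some j)

theorem GlTrans.graphIndices_src {s t : GlState R} {p : R.Alph × R.Alph}
    (h : GlTrans R s p t) : (p.1.1, p.2.1) = s.graphIndices := by
  cases h <;> rfl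

theorem GlTrans.graphIndices_tgt {s t : GlState R} {p : R.Alph × R.Alph}
    (h : GlTrans R s p t) :
    t.graphIndices = (some (R.col p.1.1 p.1.2), some (R.col p.2.1 p.2.2)) := by
  cases h <;> rfl

theorem GlRun.isWalk {w : ℕ → R.Alph × R.Alph} {q : ℕ → GlState R} (h : GlRun R w q) :
    R.IsWalk (fun n => (w n).1) ∧ R.IsWalk (fun n => (w n).2) := by
  have h0 : (((w 0).1).1, ((w 0).2).1) = (none, none) := by
    rw [(h.2 0).graphIndices_src, h.1]; rfl
  have hsucc : ∀ l, (((w (l + 1)).1).1, ((w (l + 1)).2).1) =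
      (some (R.col _ (w l).1.2), some (R.col _ (w l).2.2)) := fun l => by
    rw [(h.2 (l + 1)).graphIndices_src, (h.2 l).graphIndices_tgt]
  simp only [Prod.mk.injEq] at h0 hsucc
  exact ⟨⟨h0.1, fun l => (hsucc l).1⟩, ⟨h0.2, fun l => (hsucc l).2⟩⟩

theorem wordEdge_zero_letter {x : ℕ → R.Alph} (hx : R.IsWalkUpTo x 0) :
    (⟨none, (R.wordEdge x 0 hx).1⟩ : R.Alph) = x 0 :=
  Sigma.ext hx.1.symm (cast_heq _ _)

theorem exists_wordEdge_succ {x : ℕ → R.Alph} {m : ℕ} (hx : R.IsWalkUpTo x (m + 1))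
    (hx' : R.IsWalkUpTo x m) :
    ∃ a', (R.wordEdge x (m + 1) hx).1 = ⟨(R.wordEdge x m hx').1, a'⟩ ∧
      (⟨_, a'⟩ : R.Alph) = x (m + 1) :=
  ⟨_, rfl, Sigma.ext
    ((hx.2 m m.lt_succ_self).trans (congrArg some (R.wordEdge x m hx').2.symm)).symm
    (cast_heq _ _)⟩

section Prefixes

variable {x y : ℕ → R.Alph} (hx : R.IsWalk x) (hy : R.IsWalk y)

/-- The state of `Gl_R` after reading `n` letters: for `n = m + 1` it describes the edges
`x₀…x_m` and `y₀…y_m` of `E_m`. -/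
def PrefixState : ℕ → GlState R → Prop
  | 0, s => s = .q0 none
  | m + 1, s =>
    s.Describes (R.fullExp m) (R.wordEdge x m (hx.upTo m)).1 (R.wordEdge y m (hy.upTo m)).1

theorem adjacent_wordEdge_of_succ {m : ℕ}
    (h : (R.fullExp (m + 1)).Adjacent (R.wordEdge x (m + 1) (hx.upTo (m + 1))).1
      (R.wordEdge y (m + 1) (hy.upTo (m + 1))).1) :
    (R.fullExp m).Adjacent (R.wordEdge x m (hx.upTo m)).1 (R.wordEdge y m (hy.upTo m)).1 := by
  obtain ⟨a', ha, -⟩ := exists_wordEdge_succ (hx.upTo (m + 1)) (hx.upTo m)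
  obtain ⟨b', hb, -⟩ := exists_wordEdge_succ (hy.upTo (m + 1)) (hy.upTo m)
  rw [ha, hb] at h
  exact h.of_expandG (isLoopColored_fullExp R m)

theorem glTrans_iff_prefixState (hR : R.NoBoundaryEdge) {n : ℕ} {s t : GlState R}
    (hs : PrefixState hx hy n s) :
    GlTrans R s (x n, y n) t ↔ PrefixState hx hy (n + 1) t := by
  cases n with
  | zero =>
    rw [PrefixState] at hs
    subst hs
    rw [← wordEdge_zero_letter (hx.upTo 0), ← wordEdge_zero_letter (hy.upTo 0)]
    exact glTrans_q0_iff
  | succ m =>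
    obtain ⟨a', ha, hxa⟩ := exists_wordEdge_succ (hx.upTo (m + 1)) (hx.upTo m)
    obtain ⟨b', hb, hyb⟩ := exists_wordEdge_succ (hy.upTo (m + 1)) (hy.upTo m)
    rw [PrefixState, ha, hb, ← hxa, ← hyb]
    exact glTrans_iff_describes_expandG hR (isLoopColored_fullExp R m) hs

theorem GlRun.prefixState (hR : R.NoBoundaryEdge) {q : ℕ → GlState R}
    (hq : GlRun R (fun n => (x n, y n)) q) : ∀ n, PrefixState hx hy n (q n)
  | 0 => hq.1
  | n + 1 => (glTrans_iff_prefixState hx hy hR (hq.prefixState hR n)).1 (hq.2 n)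

theorem glAccepts_of_forall_adjacent (hR : R.NoBoundaryEdge)
    (hadj : ∀ m, (R.fullExp m).Adjacent (R.wordEdge x m (hx.upTo m)).1
      (R.wordEdge y m (hy.upTo m)).1) :
    GlAccepts R (fun n => (x n, y n)) := by
  obtain ⟨q, hq0, hq⟩ := exists_seq_of_forall_exists (PrefixState hx hy)
    (fun n s t => GlTrans R s (x n, y n) t) rfl fun n s hs => by
      obtain ⟨t, ht⟩ := (hadj n).exists_describes
      exact ⟨t, (glTrans_iff_prefixState hx hy hR hs).2 ht, ht⟩
  exact ⟨q, hq0, hq⟩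

end Prefixes

theorem ERS.Glued.adjacent {x y : ℕ → R.Alph} {hx : R.IsWalk x} {hy : R.IsWalk y}
    (h : R.Glued x y hx hy) (m : ℕ) :
    (R.fullExp m).Adjacent (R.wordEdge x m (hx.upTo m)).1 (R.wordEdge y m (hy.upTo m)).1 := by
  obtain ⟨N, hN⟩ := h
  have hanti : Antitone fun m => (R.fullExp m).Adjacent (R.wordEdge x m (hx.upTo m)).1
      (R.wordEdge y m (hy.upTo m)).1 :=
    antitone_nat_of_succ_le fun m => adjacent_wordEdge_of_succ hx hy
  exact hanti (le_max_left m N) (hN _ (le_max_right m N))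

end

/-- For an expanding edge replacement system `R`, the gluing
automaton `Gl_R` recognizes an infinite sequence `(x₀,y₀)(x₁,y₁)…` if and only
if both component sequences belong to the symbol space `Ω_R` and are glued. -/
theorem gluing_automaton_recognizes_gluing (R : ERS) (hR : R.Expanding)
    (w : ℕ → R.Alph × R.Alph) :
    GlAccepts R w ↔
      ∃ (hx : R.IsWalk fun n => (w n).1) (hy : R.IsWalk fun n => (w n).2),
        R.Glued (fun n => (w n).1) (fun n => (w n).2) hx hy := by
  constructor
  · rintro ⟨q, hq⟩
    obtain ⟨hx, hy⟩ := hq.isWalk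
    exact ⟨hx, hy, 0, fun n _ => (hq.prefixState hx hy hR.no_bd_edge (n + 1)).adjacent⟩
  · rintro ⟨hx, hy, hglued⟩
    exact glAccepts_of_forall_adjacent hx hy hR.no_bd_edge hglued.adjacent

end ERSPaper
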